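/- arXiv:2512.15291 — 8 statements merged into one kernel-verified Lean document; each statement's English description precedes it below -/
import Mathlib

section
/- Let α be a topological space, I an admissible ideal on ℕ, η : ℕ → α a sequence and x ∈ α. If every subsequence of η (i.e., every composition η ∘ φ with φ : ℕ → ℕ strictly increasing) has a further subsequence that is I-convergent to x, then η is I-convergent to x. -/
/-! If the set of indices where η leaves a neighbourhood U of x is not in I, it is infinite,
since an admissible ideal contains all finite sets. It is then the range of a subsequence
lying entirely outside U, and no further subsequence of it can be I-convergent to x: the set
of indices where such a subsequence leaves U is all of ℕ, which is not in I. -/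

/-- An ideal on ℕ: a collection of subsets of ℕ containing ∅,
closed under subsets and finite unions. -/
structure IsIdeal (I : Set (Set ℕ)) : Prop where
  empty_mem : (∅ : Set ℕ) ∈ I
  subset_mem : ∀ {A B : Set ℕ}, A ∈ I → B ⊆ A → B ∈ I
  union_mem : ∀ {A B : Set ℕ}, A ∈ I → B ∈ I → A ∪ B ∈ I

/-- A non-trivial ideal: an ideal with I ≠ {∅} and ℕ ∉ I. -/
def IsNonTrivialIdeal (I : Set (Set ℕ)) : Prop :=
  IsIdeal I ∧ I ≠ {∅} ∧ (Set.univ : Set ℕ) ∉ I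

/-- An admissible ideal: a non-trivial ideal containing every singleton. -/
def IsAdmissibleIdeal (I : Set (Set ℕ)) : Prop :=
  IsNonTrivialIdeal I ∧ ∀ n : ℕ, ({n} : Set ℕ) ∈ I

variable {α : Type*} [TopologicalSpace α]

/-- A sequence η is I-convergent to x if for every neighborhood U of x,
the set {n | η n ∉ U} belongs to I. -/
def IConv (I : Set (Set ℕ)) (η : ℕ → α) (x : α) : Prop :=
  ∀ U ∈ nhds x, {n : ℕ | η n ∉ U} ∈ I

/-- A sequence η is I*-convergent to x if there is P ⊆ ℕ with ℕ \ P ∈ I such that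
the subsequence indexed by P converges to x (for every neighborhood U of x,
{n ∈ P | η n ∉ U} is finite). -/
def IStarConv (I : Set (Set ℕ)) (η : ℕ → α) (x : α) : Prop :=
  ∃ P : Set ℕ, Pᶜ ∈ I ∧ ∀ U ∈ nhds x, {n : ℕ | n ∈ P ∧ η n ∉ U}.Finite

/-- x is an I-limit point of η if there exists P ∉ I such that the subsequence
of η indexed by P converges to x. -/
def IsILimitPt (I : Set (Set ℕ)) (η : ℕ → α) (x : α) : Prop :=
  ∃ P : Set ℕ, P ∉ I ∧ ∀ U ∈ nhds x, {n : ℕ | n ∈ P ∧ η n ∉ U}.Finite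

/-- x is an I-cluster point of η if for every neighborhood U of x,
{n | η n ∈ U} ∉ I. -/
def IsIClusterPt (I : Set (Set ℕ)) (η : ℕ → α) (x : α) : Prop :=
  ∀ U ∈ nhds x, {n : ℕ | η n ∈ U} ∉ I

/-- Condition (AP): for every countable family of pairwise disjoint sets in I there
is a countable family K with each symmetric difference Hᵢ Δ Kᵢ finite and ⋃ Kᵢ ∈ I. -/
def APCondition (I : Set (Set ℕ)) : Prop :=
  ∀ H : ℕ → Set ℕ, (∀ i, H i ∈ I) → Pairwise (Function.onFun Disjoint H) →
    ∃ K : ℕ → Set ℕ, (∀ i, (symmDiff (H i) (K i)).Finite) ∧ (⋃ i, K i) ∈ I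

theorem IsIdeal.finite_mem {I : Set (Set ℕ)} (hI : IsIdeal I) (hsing : ∀ n : ℕ, ({n} : Set ℕ) ∈ I)
    {s : Set ℕ} (hs : s.Finite) : s ∈ I := by
  induction s, hs using Set.Finite.induction_on with
  | empty => exact hI.empty_mem
  | @insert a t _ _ ih => exact Set.insert_eq a t ▸ hI.union_mem (hsing a) ih

theorem not_IConv_of_forall_notMem {I : Set (Set ℕ)} (hI : (Set.univ : Set ℕ) ∉ I)
    {η : ℕ → α} {x : α} {U : Set α} (hU : U ∈ nhds x) (hη : ∀ n, η n ∉ U) :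
    ¬ IConv I η x := fun hconv =>
  hI (by simpa only [hη, not_false_eq_true, Set.ofPred_true] using hconv U hU)

theorem stmt_2 (I : Set (Set ℕ)) (hI : IsAdmissibleIdeal I)
    (η : ℕ → α) (x : α)
    (h : ∀ φ : ℕ → ℕ, StrictMono φ →
      ∃ ψ : ℕ → ℕ, StrictMono ψ ∧ IConv I (η ∘ φ ∘ ψ) x) :
    IConv I η x := by
  obtain ⟨⟨hideal, -, huniv⟩, hsing⟩ := hI
  intro U hU
  by_contra hbad
  have hinf : {n : ℕ | η n ∉ U}.Infinite := fun hfin => hbad (hideal.finite_mem hsing hfin)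
  obtain ⟨φ, hφ, hφU⟩ := Filter.extraction_of_frequently_atTop
    (Nat.frequently_atTop_iff_infinite.2 hinf)
  obtain ⟨ψ, -, hconv⟩ := h φ hφ
  exact not_IConv_of_forall_notMem huniv hU (fun n => hφU (ψ n)) hconv
end

section
/- Let α be a topological space, I an admissible ideal on ℕ, η : ℕ → α a sequence and x ∈ α. If η is I*-convergent to x, then η is I-convergent to x. -/
variable {α : Type*} [TopologicalSpace α]

theorem IsIdeal.mem_of_finite {I : Set (Set ℕ)} (hI : IsIdeal I)
    (hsingle : ∀ n : ℕ, ({n} : Set ℕ) ∈ I) {A : Set ℕ} (hA : A.Finite) : A ∈ I := by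
  refine Set.Finite.induction_on A hA hI.empty_mem ?_
  intro a s _ _ hs
  rw [Set.insert_eq]
  exact hI.union_mem (hsingle a) hs

theorem IStarConv.iConv {I : Set (Set ℕ)} (hI : IsIdeal I)
    (hsingle : ∀ n : ℕ, ({n} : Set ℕ) ∈ I) {η : ℕ → α} {x : α} (h : IStarConv I η x) :
    IConv I η x := by
  obtain ⟨P, hPc, hP⟩ := h
  intro U hU
  have hsub : {n | η n ∉ U} ⊆ Pᶜ ∪ {n | n ∈ P ∧ η n ∉ U} := fun n hn => by
    by_cases hnP : n ∈ P
    · exact Or.inr ⟨hnP, hn⟩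
    · exact Or.inl hnP
  exact hI.subset_mem (hI.union_mem hPc (hI.mem_of_finite hsingle (hP U hU))) hsub

theorem stmt_3 (I : Set (Set ℕ)) (hI : IsAdmissibleIdeal I)
    (η : ℕ → α) (x : α) (h : IStarConv I η x) :
    IConv I η x :=
  h.iConv hI.1.1 hI.2
end

section
/- Let α be a Hausdorff topological space and I an admissible ideal on ℕ. If a sequence η : ℕ → α is I*-convergent to x ∈ α and also I*-convergent to y ∈ α, then x = y. -/
variable {α : Type*} [TopologicalSpace α]

/-! Both witnesses `P`, `Q` have complements in `I`, so `(P ∩ Q)ᶜ ∈ I` and admissibility forces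
`P ∩ Q` to be infinite. Hence the cofinite filter restricted to `P ∩ Q` is nontrivial, and `η`
converges along it to both `x` and `y`. -/

open Filter Topology

theorem IsIdeal.compl_inter_mem {I : Set (Set ℕ)} (hI : IsIdeal I) {P Q : Set ℕ}
    (hP : Pᶜ ∈ I) (hQ : Qᶜ ∈ I) : (P ∩ Q)ᶜ ∈ I :=
  Set.compl_inter P Q ▸ hI.union_mem hP hQ

theorem IsAdmissibleIdeal.finite_mem {I : Set (Set ℕ)} (hI : IsAdmissibleIdeal I)
    {S : Set ℕ} (hS : S.Finite) : S ∈ I := by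
  induction S, hS using Set.Finite.induction_on with
  | empty => exact hI.1.1.empty_mem
  | @insert n S _ _ ih => exact Set.insert_eq n S ▸ hI.1.1.union_mem (hI.2 n) ih

theorem IsAdmissibleIdeal.infinite_of_compl_mem {I : Set (Set ℕ)} (hI : IsAdmissibleIdeal I)
    {P : Set ℕ} (hP : Pᶜ ∈ I) : P.Infinite := fun hfin =>
  hI.1.2.2 (Set.union_compl_self P ▸ hI.1.1.union_mem (hI.finite_mem hfin) hP)

theorem tendsto_cofinite_inf_principal_iff {β : Type*} {η : β → α} {P : Set β} {x : α} :
    Tendsto η (cofinite ⊓ 𝓟 P) (𝓝 x) ↔ ∀ U ∈ 𝓝 x, {n | n ∈ P ∧ η n ∉ U}.Finite := by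
  refine forall₂_congr fun U _ => ?_
  simp only [mem_map, mem_inf_principal, mem_cofinite, Set.compl_ofPred, Classical.not_imp,
    Set.mem_preimage]

theorem stmt_4 [T2Space α] (I : Set (Set ℕ)) (hI : IsAdmissibleIdeal I)
    (η : ℕ → α) (x y : α)
    (hx : IStarConv I η x) (hy : IStarConv I η y) :
    x = y := by
  obtain ⟨P, hP, hηP⟩ := hx
  obtain ⟨Q, hQ, hηQ⟩ := hy
  have : (cofinite ⊓ 𝓟 (P ∩ Q)).NeBot := cofinite_inf_principal_neBot_iff.2
    (hI.infinite_of_compl_mem (hI.1.1.compl_inter_mem hP hQ))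
  refine tendsto_nhds_unique (f := η) (l := cofinite ⊓ 𝓟 (P ∩ Q)) ?_ ?_
  · exact (tendsto_cofinite_inf_principal_iff.2 hηP).mono_left
      (inf_le_inf_left _ (principal_mono.2 Set.inter_subset_left))
  · exact (tendsto_cofinite_inf_principal_iff.2 hηQ).mono_left
      (inf_le_inf_left _ (principal_mono.2 Set.inter_subset_right))
end

section
/- Let α be a first countable topological space and I an admissible ideal on ℕ satisfying condition (AP). Then for every sequence η : ℕ → α and every x ∈ α, if η is I-convergent to x then η is I*-convergent to x. -/
variable {α : Type*} [TopologicalSpace α]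

theorem stmt_6 [FirstCountableTopology α]
    (I : Set (Set ℕ)) (hI : IsAdmissibleIdeal I) (hAP : APCondition I)
    (η : ℕ → α) (x : α) (h : IConv I η x) :
    IStarConv I η x := by
  obtain ⟨U, hU⟩ := (nhds x).exists_antitone_basis
  set A : ℕ → Set ℕ := fun n => {k | η k ∉ U n} with hA
  have hAI : ∀ n, A n ∈ I := fun n => h (U n) (hU.mem n)
  have hAmono : Monotone A := by
    intro i j hij k hk hkj
    exact hk (hU.antitone hij hkj)
  set H : ℕ → Set ℕ := fun n => Nat.rec (A 0) (fun m _ => A (m+1) \ A m) n with hH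
  have hH0 : H 0 = A 0 := rfl
  have hHS : ∀ n, H (n+1) = A (n+1) \ A n := fun n => rfl
  have hHsub : ∀ n, H n ⊆ A n := by
    intro n
    cases n with
    | zero => exact le_refl _
    | succ m => exact Set.diff_subset
  have hHI : ∀ n, H n ∈ I := fun n => hI.1.1.subset_mem (hAI n) (hHsub n)
  have hdisj : Pairwise (Function.onFun Disjoint H) := by
    have key : ∀ i j, i < j → Disjoint (H i) (H j) := by
      intro i j hij
      cases j with
      | zero => omega
      | succ m =>
        rw [hHS]
        have : i ≤ m := by omega
        exact Set.disjoint_of_subset_left ((hHsub i).trans (hAmono this))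
          Set.disjoint_sdiff_right
    intro i j hij
    rcases lt_or_gt_of_ne hij with h' | h'
    · exact key i j h'
    · exact (key j i h').symm
  obtain ⟨K, hKfin, hKI⟩ := hAP H hHI hdisj
  refine ⟨(⋃ i, K i)ᶜ, by rwa [compl_compl], ?_⟩
  intro V hV
  obtain ⟨m, hm⟩ := hU.toHasBasis.mem_iff.1 hV
  have hcover : ∀ n, A n ⊆ ⋃ i ∈ Finset.range (n+1), H i := by
    intro n
    induction n with
    | zero =>
      intro k hk
      simp only [Finset.mem_range, Set.mem_iUnion]
      exact ⟨0, by omega, hk⟩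
    | succ p ih =>
      intro k hk
      by_cases hkp : k ∈ A p
      · obtain ⟨i, hi1, hi2⟩ := Set.mem_iUnion₂.1 (ih hkp)
        exact Set.mem_iUnion₂.2 ⟨i, Finset.mem_range.2 (by simp at hi1; omega), hi2⟩
      · exact Set.mem_iUnion₂.2 ⟨p+1, Finset.self_mem_range_succ _, ⟨hk, hkp⟩⟩
  have hsub : {n : ℕ | n ∈ (⋃ i, K i)ᶜ ∧ η n ∉ V} ⊆
      ⋃ i ∈ Finset.range (m+1), (H i \ K i) := by
    intro k ⟨hk1, hk2⟩
    have hkA : k ∈ A m := fun hUk => hk2 (hm.2 hUk)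
    obtain ⟨i, hi1, hi2⟩ := Set.mem_iUnion₂.1 (hcover m hkA)
    refine Set.mem_iUnion₂.2 ⟨i, hi1, hi2, ?_⟩
    intro hkK
    exact hk1 (Set.mem_iUnion.2 ⟨i, hkK⟩)
  refine Set.Finite.subset ?_ hsub
  apply Set.Finite.biUnion (Finset.finite_toSet _)
  intro i _
  exact (hKfin i).subset (fun k ⟨h1, h2⟩ => Or.inl ⟨h1, h2⟩)
end

section
/- Let α be a first countable T1 topological space having at least one limit point (a point x₀ ∈ α such that every neighborhood of x₀ contains a point different from x₀), and let I be an admissible ideal on ℕ. If for every sequence η : ℕ → α and every x ∈ α, I-convergence of η to x implies I*-convergence of η to x, then I satisfies condition (AP). -/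
variable {α : Type*} [TopologicalSpace α]

/-! Take a limit point `x₀` and a sequence `yᵢ → x₀` with `yᵢ ≠ x₀`. The sequence equal to `yᵢ`
on `Hᵢ` and to `x₀` off `⋃ Hᵢ` is `I`-convergent to `x₀`, since it leaves a neighbourhood of `x₀`
only on finitely many blocks `Hᵢ`. An `I*`-witness `P` then meets each `Hᵢ` in a finite set
(in a T1 space `{yᵢ}ᶜ` is a neighbourhood of `x₀`), so `Kᵢ := Hᵢ \ P` works:
`⋃ Kᵢ ⊆ Pᶜ ∈ I`. -/

open Filter Topology

theorem IsIdeal.biUnion_finset_mem {I : Set (Set ℕ)} (hI : IsIdeal I) {H : ℕ → Set ℕ}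
    (hH : ∀ i, H i ∈ I) (s : Finset ℕ) : (⋃ i ∈ s, H i) ∈ I := by
  induction s using Finset.induction with
  | empty => simpa using hI.empty_mem
  | insert i s _ ih =>
    rw [Finset.set_biUnion_insert]
    exact hI.union_mem (hH i) ih

theorem exists_seq_ne_tendsto_nhds [FrechetUrysohnSpace α] {x : α}
    (hx : ∀ U ∈ 𝓝 x, ∃ y ∈ U, y ≠ x) :
    ∃ y : ℕ → α, (∀ n, y n ≠ x) ∧ Tendsto y atTop (𝓝 x) :=
  mem_closure_iff_seq_limit.mp <| mem_closure_iff_nhds.mpr fun U hU =>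
    let ⟨y, hyU, hyx⟩ := hx U hU
    ⟨y, hyU, hyx⟩

open Classical in
noncomputable def blockSeq {β : Type*} (H : ℕ → Set ℕ) (y : ℕ → β) (x : β) (n : ℕ) : β :=
  if h : ∃ i, n ∈ H i then y h.choose else x

theorem blockSeq_eq_of_mem {β : Type*} {H : ℕ → Set ℕ}
    (hH : Pairwise (Function.onFun Disjoint H)) (y : ℕ → β) (x : β) {i n : ℕ}
    (hn : n ∈ H i) : blockSeq H y x n = y i := by
  have hex : ∃ j, n ∈ H j := ⟨i, hn⟩
  have hchoose : hex.choose = i := by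
    by_contra hne
    exact Set.disjoint_left.mp (hH hne) hex.choose_spec hn
  simp only [blockSeq, dif_pos hex, hchoose]

theorem iConv_blockSeq {I : Set (Set ℕ)} (hI : IsIdeal I) {H : ℕ → Set ℕ} (hH : ∀ i, H i ∈ I)
    {y : ℕ → α} {x : α} (hy : Tendsto y atTop (𝓝 x)) : IConv I (blockSeq H y x) x := by
  intro U hU
  obtain ⟨N, hN⟩ := eventually_atTop.mp (hy hU)
  refine hI.subset_mem (hI.biUnion_finset_mem hH (Finset.range N)) fun n hn => ?_
  by_cases hex : ∃ i, n ∈ H i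
  · have hyU : y hex.choose ∉ U := by simpa [blockSeq, dif_pos hex] using hn
    simp only [Set.mem_iUnion, Finset.mem_range]
    exact ⟨hex.choose, lt_of_not_ge fun hle => hyU (hN _ hle), hex.choose_spec⟩
  · exact absurd (mem_of_mem_nhds hU) (by simpa [blockSeq, dif_neg hex] using hn)

theorem finite_mem_and_eq_of_ne [T1Space α] {η : ℕ → α} {x z : α} {P : Set ℕ}
    (hP : ∀ U ∈ 𝓝 x, {n | n ∈ P ∧ η n ∉ U}.Finite) (hz : z ≠ x) :
    {n | n ∈ P ∧ η n = z}.Finite :=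
  (hP _ (compl_singleton_mem_nhds hz.symm)).subset fun _ ⟨hnP, hnz⟩ => ⟨hnP, not_not.mpr hnz⟩

theorem symmDiff_sdiff_self_eq_inter {β : Type*} (A P : Set β) : symmDiff A (A \ P) = A ∩ P := by
  rw [symmDiff_comm, symmDiff_of_le Set.sdiff_subset, Set.sdiff_sdiff_right_self]

theorem stmt_7 [FirstCountableTopology α] [T1Space α]
    (hlimit : ∃ x₀ : α, ∀ U ∈ nhds x₀, ∃ y ∈ U, y ≠ x₀)
    (I : Set (Set ℕ)) (hI : IsAdmissibleIdeal I)
    (h : ∀ (η : ℕ → α) (x : α), IConv I η x → IStarConv I η x) :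
    APCondition I := by
  intro H hH hdisj
  obtain ⟨x₀, hx₀⟩ := hlimit
  obtain ⟨y, hy_ne, hy_lim⟩ := exists_seq_ne_tendsto_nhds hx₀
  obtain ⟨P, hPc, hP⟩ := h _ x₀ (iConv_blockSeq hI.1.1 hH hy_lim)
  refine ⟨fun i => H i \ P, fun i => ?_,
    hI.1.1.subset_mem hPc (Set.iUnion_subset fun i => Set.sdiff_subset_compl _ _)⟩
  rw [symmDiff_sdiff_self_eq_inter]
  exact (finite_mem_and_eq_of_ne hP (hy_ne i)).subset fun n hn =>
    ⟨hn.2, blockSeq_eq_of_mem hdisj y x₀ hn.1⟩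
end

section
/- Let α be a topological space, I an admissible ideal on ℕ, and η : ℕ → α a sequence. Then every I-limit point of η is an I-cluster point of η; that is, the set of I-limit points of η is contained in the set of I-cluster points of η. -/
variable {α : Type*} [TopologicalSpace α]

namespace IsIdeal

variable {I : Set (Set ℕ)}

theorem finite_mem_s8 (hI : IsIdeal I) (hsingleton : ∀ n : ℕ, ({n} : Set ℕ) ∈ I) {S : Set ℕ}
    (hS : S.Finite) : S ∈ I := by
  induction S, hS using Set.Finite.induction_on with
  | empty => exact hI.empty_mem
  | insert _ _ ih =>
    rw [Set.insert_eq]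
    exact hI.union_mem (hsingleton _) ih

theorem mem_of_diff_finite (hI : IsIdeal I) (hsingleton : ∀ n : ℕ, ({n} : Set ℕ) ∈ I)
    {A P : Set ℕ} (hA : A ∈ I) (hPA : (P \ A).Finite) : P ∈ I :=
  hI.subset_mem (hI.union_mem hA (hI.finite_mem_s8 hsingleton hPA))
    (Set.sdiff_subset_iff.1 subset_rfl)

end IsIdeal

theorem stmt_8 (I : Set (Set ℕ)) (hI : IsAdmissibleIdeal I) (η : ℕ → α) :
    {x : α | IsILimitPt I η x} ⊆ {x : α | IsIClusterPt I η x} := by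
  rintro x ⟨P, hP, hconv⟩ U hU hvisits
  exact hP (hI.1.1.mem_of_diff_finite hI.2 hvisits (hconv U hU))
end

section
/- Let α be a topological space, I an admissible ideal on ℕ, and η : ℕ → α a sequence. Then the set of all I-cluster points of η is a closed subset of α. -/
variable {α : Type*} [TopologicalSpace α]

theorem stmt_9 (I : Set (Set ℕ)) (hI : IsAdmissibleIdeal I) (η : ℕ → α) :
    IsClosed {x : α | IsIClusterPt I η x} := by
  rw [← isOpen_compl_iff]
  rw [isOpen_iff_forall_mem_open]
  intro x hx
  simp only [Set.mem_compl_iff, Set.mem_setOf_eq, IsIClusterPt, not_forall] at hx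
  obtain ⟨U, hU, hUI⟩ := hx
  rw [not_not] at hUI
  obtain ⟨V, hVU, hVopen, hxV⟩ := mem_nhds_iff.mp hU
  refine ⟨V, ?_, hVopen, hxV⟩
  intro y hy hycl
  exact hycl V (hVopen.mem_nhds hy)
    (hI.1.1.subset_mem hUI (fun n hn => hVU hn))
end

section
/- Let α be a topological space, I an admissible ideal on ℕ, and η, γ : ℕ → α sequences such that {n ∈ ℕ | η n ≠ γ n} ∈ I. Then η and γ have the same set of I-limit points. -/
variable {α : Type*} [TopologicalSpace α]

lemma ilim_mono (I : Set (Set ℕ)) (hId : IsIdeal I)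
    (η γ : ℕ → α) (h : {n : ℕ | η n ≠ γ n} ∈ I) (x : α)
    (hx : IsILimitPt I η x) : IsILimitPt I γ x := by
  obtain ⟨P, hP, hconv⟩ := hx
  refine ⟨P \ {n : ℕ | η n ≠ γ n}, ?_, ?_⟩
  · intro hmem
    apply hP
    exact hId.subset_mem (hId.union_mem hmem h) (fun n hn => by
      by_cases hc : η n ≠ γ n
      · exact Or.inr hc
      · exact Or.inl ⟨hn, hc⟩)
  · intro U hU
    refine ((hconv U hU).subset ?_)
    rintro n ⟨⟨hnP, hne⟩, hnU⟩
    simp only [Set.mem_setOf_eq, not_not] at hne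
    exact ⟨hnP, hne ▸ hnU⟩

theorem stmt_10 (I : Set (Set ℕ)) (hI : IsAdmissibleIdeal I)
    (η γ : ℕ → α) (h : {n : ℕ | η n ≠ γ n} ∈ I) :
    {x : α | IsILimitPt I η x} = {x : α | IsILimitPt I γ x} := by
  ext x
  have hId := hI.1.1
  have h' : {n : ℕ | γ n ≠ η n} ∈ I := hId.subset_mem h (fun n hn => (Ne.symm hn))
  exact ⟨ilim_mono I hId η γ h x, ilim_mono I hId γ η h' x⟩
end
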